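/- arXiv:2402.17967 — 3 statements merged into one kernel-verified Lean document; each statement's English description precedes it below -/
import Mathlib

section
/- Let X be a finite set, P and Q strictly positive probability mass functions on X, C : X → ℝ, α > 0, ε ∈ ℝ. Then the maximum of ∑ₓ C̃(x)P(x) over all C̃ : X → ℝ satisfying α·log(∑ₓ Q(x)·exp((C̃(x)−C(x))/α)) ≤ ε equals ∑ₓ C(x)P(x) + α·KL(P‖Q) + ε, attained at C̃(x) = C(x) − α·log(Q(x)/P(x)) + ε. -/
open Real

theorem stmt_2 {X : Type*} [Fintype X]
    (P Q C : X → ℝ) (α ε : ℝ) (hα : 0 < α)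
    (hP0 : ∀ x, 0 < P x) (hP1 : ∑ x, P x = 1)
    (hQ0 : ∀ x, 0 < Q x) (hQ1 : ∑ x, Q x = 1) :
    IsGreatest
      {v : ℝ | ∃ Ct : X → ℝ,
        α * Real.log (∑ x, Q x * Real.exp ((Ct x - C x) / α)) ≤ ε ∧
        v = ∑ x, Ct x * P x}
      ((∑ x, C x * P x) + α * (∑ x, P x * Real.log (P x / Q x)) + ε) ∧
    (∑ x, (C x - α * Real.log (Q x / P x) + ε) * P x) =
      (∑ x, C x * P x) + α * (∑ x, P x * Real.log (P x / Q x)) + ε := by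
  have hkey : (∑ x, (C x - α * Real.log (Q x / P x) + ε) * P x) =
      (∑ x, C x * P x) + α * (∑ x, P x * Real.log (P x / Q x)) + ε := by
    have h : ∀ x : X, (C x - α * Real.log (Q x / P x) + ε) * P x
        = C x * P x + α * (P x * Real.log (P x / Q x)) + ε * P x := by
      intro x
      have h1 : Real.log (Q x / P x) = - Real.log (P x / Q x) := by
        rw [← Real.log_inv, inv_div]
      rw [h1]; ring
    rw [Finset.sum_congr rfl fun x _ => h x, Finset.sum_add_distrib,
      Finset.sum_add_distrib, ← Finset.mul_sum, ← Finset.mul_sum, hP1, mul_one]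
  refine ⟨⟨⟨fun x => C x - α * Real.log (Q x / P x) + ε, ?_, hkey.symm⟩, ?_⟩, hkey⟩
  · -- the maximizer satisfies the constraint with equality
    have hterm : ∀ x : X, Q x * Real.exp ((C x - α * Real.log (Q x / P x) + ε - C x) / α)
        = P x * Real.exp (ε / α) := by
      intro x
      have harg : (C x - α * Real.log (Q x / P x) + ε - C x) / α
          = Real.log (P x / Q x) + ε / α := by
        rw [show Q x / P x = (P x / Q x)⁻¹ from (inv_div _ _).symm, Real.log_inv]
        field_simp
        ring
      rw [harg, Real.exp_add, Real.exp_log (div_pos (hP0 x) (hQ0 x))]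
      field_simp
      exact mul_div_cancel_left₀ _ (hQ0 x).ne'
    rw [Finset.sum_congr rfl fun x _ => hterm x, ← Finset.sum_mul, hP1, one_mul,
      Real.log_exp]
    rw [mul_div_cancel₀ _ hα.ne']
  · -- upper bound
    rintro v ⟨Ct, hc, rfl⟩
    set f : X → ℝ := fun x => (Ct x - C x) / α with hf
    have hjen := (strictConcaveOn_log_Ioi.concaveOn).le_map_sum
      (t := Finset.univ) (w := P) (p := fun x => Q x * Real.exp (f x) / P x)
      (fun i _ => (hP0 i).le) hP1 (fun i _ => by
        have h1 := hP0 i; have h2 := hQ0 i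
        exact Set.mem_Ioi.mpr (by positivity))
    simp only [smul_eq_mul] at hjen
    have hsum : ∑ x, P x * (Q x * Real.exp (f x) / P x) = ∑ x, Q x * Real.exp (f x) :=
      Finset.sum_congr rfl fun x _ => by
        rw [mul_div_assoc'] ; exact mul_div_cancel_left₀ _ (hP0 x).ne'
    rw [hsum] at hjen
    have hlogterm : ∀ x : X, Real.log (Q x * Real.exp (f x) / P x)
        = f x - Real.log (P x / Q x) := by
      intro x
      rw [Real.log_div (mul_pos (hQ0 x) (Real.exp_pos _)).ne' (hP0 x).ne',
        Real.log_mul (hQ0 x).ne' (Real.exp_ne_zero _), Real.log_exp,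
        Real.log_div (hP0 x).ne' (hQ0 x).ne']
      ring
    rw [Finset.sum_congr rfl fun x _ => by rw [hlogterm x]] at hjen
    have h2 : α * ∑ x, P x * (f x - Real.log (P x / Q x)) ≤ ε :=
      le_trans (mul_le_mul_of_nonneg_left hjen hα.le) hc
    have hexp : ∀ x : X, α * (P x * (f x - Real.log (P x / Q x)))
        = P x * (Ct x - C x) - α * (P x * Real.log (P x / Q x)) := by
      intro x; simp only [hf]; field_simp
    rw [Finset.mul_sum, Finset.sum_congr rfl fun x _ => hexp x,
      Finset.sum_sub_distrib, ← Finset.mul_sum] at h2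
    have hAB : ∑ x, P x * (Ct x - C x) = (∑ x, Ct x * P x) - ∑ x, C x * P x := by
      rw [← Finset.sum_sub_distrib]
      exact Finset.sum_congr rfl fun x _ => by ring
    rw [hAB] at h2
    linarith
end

section
/- For any C̃ : X → ℝ in the robust set 𝒞 (i.e., α·log(∑ₓ Q(x)·exp((C̃(x)−C(x))/α)) ≤ ε) and any probability mass function P on X with support contained in the support of Q, we have ∑ₓ C̃(x)P(x) ≤ ∑ₓ C(x)P(x) + α·KL(P‖Q) + ε. -/
/-!
Writing `f = (C̃ - C) / α`, Jensen's inequality for the concave `log`, with weights `P` and points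
`Q x · exp (f x) / P x` on the support of `P`, gives the Gibbs variational inequality
`∑ P f ≤ KL(P‖Q) + log ∑ Q exp f`; multiplying by `α` and using the robustness constraint
`α log ∑ Q exp f ≤ ε` yields the bound.
-/

open Real Finset

theorem sum_mul_le_sum_mul_log_div_add_log_sum_mul_exp {ι : Type*} (s : Finset ι)
    (P Q f : ι → ℝ) (hP : ∀ i ∈ s, 0 < P i) (hP1 : ∑ i ∈ s, P i = 1) (hQ : ∀ i ∈ s, 0 < Q i) :
    ∑ i ∈ s, P i * f i ≤
      ∑ i ∈ s, P i * log (P i / Q i) + log (∑ i ∈ s, Q i * exp (f i)) := by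
  have hjensen := strictConcaveOn_log_Ioi.concaveOn.le_map_sum (t := s) (w := P)
    (p := fun i => Q i * exp (f i) / P i) (fun i hi => (hP i hi).le) hP1
    fun i hi => div_pos (mul_pos (hQ i hi) (exp_pos _)) (hP i hi)
  have hpoint : ∀ i ∈ s, P i * log (Q i * exp (f i) / P i) = P i * f i - P i * log (P i / Q i) := by
    intro i hi
    have hPi := (hP i hi).ne'
    have hQi := (hQ i hi).ne'
    rw [log_div (by positivity) hPi, log_mul hQi (exp_pos _).ne', log_exp, log_div hPi hQi]
    ring
  have hcancel : ∀ i ∈ s, P i * (Q i * exp (f i) / P i) = Q i * exp (f i) := fun i hi =>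
    mul_div_cancel₀ _ (hP i hi).ne'
  simp only [smul_eq_mul] at hjensen
  rw [sum_congr rfl hpoint, sum_congr rfl hcancel, sum_sub_distrib] at hjensen
  linarith

theorem sum_filter_pos_mul {ι : Type*} (s : Finset ι) (P g : ι → ℝ) (hP : ∀ i ∈ s, 0 ≤ P i) :
    ∑ i ∈ s.filter (fun i => 0 < P i), g i * P i = ∑ i ∈ s, g i * P i :=
  sum_filter_of_ne fun i hi h => (hP i hi).lt_of_ne (right_ne_zero_of_mul h).symm

theorem stmt_3_general {X : Type*} [Fintype X]
    (P Q C Ct : X → ℝ) (α ε : ℝ) (hα : 0 < α)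
    (hP0 : ∀ x, 0 ≤ P x) (hP1 : ∑ x, P x = 1)
    (hQ0 : ∀ x, 0 ≤ Q x)
    (hsupp : ∀ x, 0 < P x → 0 < Q x)
    (hCt : α * Real.log (∑ x, Q x * Real.exp ((Ct x - C x) / α)) ≤ ε) :
    (∑ x, Ct x * P x) ≤
      (∑ x, C x * P x) +
        α * (∑ x ∈ Finset.univ.filter (fun x => 0 < P x),
              P x * Real.log (P x / Q x)) + ε := by
  set s := univ.filter (fun x => 0 < P x)
  set f := fun x => (Ct x - C x) / α
  have hsupport (g : X → ℝ) : ∑ x ∈ s, g x * P x = ∑ x, g x * P x :=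
    sum_filter_pos_mul univ P g fun x _ => hP0 x
  have hPs : ∑ x ∈ s, P x = 1 := by rw [← hP1]; simpa using hsupport 1
  have hP : ∀ x ∈ s, 0 < P x := fun x hx => (mem_filter.mp hx).2
  have hQ : ∀ x ∈ s, 0 < Q x := fun x hx => hsupp x (hP x hx)
  have hgibbs := sum_mul_le_sum_mul_log_div_add_log_sum_mul_exp s P Q f hP hPs hQ
  have hs : s.Nonempty := nonempty_of_sum_ne_zero (hPs ▸ one_ne_zero)
  have hlog : log (∑ x ∈ s, Q x * exp (f x)) ≤ log (∑ x, Q x * exp (f x)) :=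
    log_le_log (sum_pos (fun x hx => mul_pos (hQ x hx) (exp_pos _)) hs)
      (sum_le_sum_of_subset_of_nonneg (subset_univ s)
        fun x _ _ => mul_nonneg (hQ0 x) (exp_pos _).le)
  have hdiff : ∑ x, Ct x * P x = ∑ x, C x * P x + α * ∑ x ∈ s, P x * f x := by
    rw [mul_sum, ← hsupport Ct, ← hsupport C, ← sum_add_distrib]
    refine sum_congr rfl fun x _ => ?_
    simp only [f]
    field_simp
    ring
  have hscaled : α * ∑ x ∈ s, P x * f x ≤
      α * ∑ x ∈ s, P x * log (P x / Q x) + α * log (∑ x, Q x * exp (f x)) := by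
    rw [← mul_add]
    exact mul_le_mul_of_nonneg_left (by linarith) hα.le
  linarith

theorem stmt_3 {X : Type*} [Fintype X]
    (P Q C Ct : X → ℝ) (α ε : ℝ) (hα : 0 < α)
    (hP0 : ∀ x, 0 ≤ P x) (hP1 : ∑ x, P x = 1)
    (hQ0 : ∀ x, 0 ≤ Q x) (hQ1 : ∑ x, Q x = 1)
    (hsupp : ∀ x, 0 < P x → 0 < Q x)
    (hCt : α * Real.log (∑ x, Q x * Real.exp ((Ct x - C x) / α)) ≤ ε) :
    (∑ x, Ct x * P x) ≤
      (∑ x, C x * P x) +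
        α * (∑ x ∈ Finset.univ.filter (fun x => 0 < P x),
              P x * Real.log (P x / Q x)) + ε :=
  stmt_3_general P Q C Ct α ε hα hP0 hP1 hQ0 hsupp hCt
end

section
/- Donsker–Varadhan inequality on a finite set: for probability mass functions P, Q on a finite set X with supp(P) ⊆ supp(Q), and any f : X → ℝ, ∑ₓ f(x)P(x) ≤ log(∑ₓ Q(x)·exp(f(x))) + KL(P‖Q). -/
open Real

theorem stmt_4 {X : Type*} [Fintype X]
    (P Q f : X → ℝ)
    (hP0 : ∀ x, 0 ≤ P x) (hP1 : ∑ x, P x = 1)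
    (hQ0 : ∀ x, 0 ≤ Q x) (hQ1 : ∑ x, Q x = 1)
    (hsupp : ∀ x, 0 < P x → 0 < Q x) :
    (∑ x, f x * P x) ≤
      Real.log (∑ x, Q x * Real.exp (f x)) +
        ∑ x ∈ Finset.univ.filter (fun x => 0 < P x), P x * Real.log (P x / Q x) := by
  classical
  set S := Finset.univ.filter (fun x => 0 < P x) with hS
  set Z := ∑ x, Q x * Real.exp (f x) with hZ
  have hg0 : ∀ x, 0 ≤ Q x * Real.exp (f x) := fun x => mul_nonneg (hQ0 x) (Real.exp_pos _).le
  have hPS : ∑ x ∈ S, P x = 1 := by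
    rw [← hP1]
    apply Finset.sum_subset (Finset.subset_univ _)
    intro x _ hx
    simp only [hS, Finset.mem_filter, Finset.mem_univ, true_and, not_lt] at hx
    exact le_antisymm hx (hP0 x)
  have hZpos : 0 < Z := by
    obtain ⟨x, hx⟩ : ∃ x, 0 < P x := by
      by_contra h; push_neg at h
      have h0 : ∑ x, P x = 0 :=
        Finset.sum_eq_zero (fun x _ => le_antisymm (h x) (hP0 x))
      rw [hP1] at h0; norm_num at h0
    exact lt_of_lt_of_le (mul_pos (hsupp x hx) (Real.exp_pos _))
      (Finset.single_le_sum (fun i _ => hg0 i) (Finset.mem_univ x))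
  have hfP : ∑ x, f x * P x = ∑ x ∈ S, f x * P x := by
    symm; apply Finset.sum_subset (Finset.subset_univ _)
    intro x _ hx
    simp only [hS, Finset.mem_filter, Finset.mem_univ, true_and, not_lt] at hx
    have : P x = 0 := le_antisymm hx (hP0 x)
    simp [this]
  have key : ∀ x ∈ S,
      f x * P x - P x * Real.log (P x / Q x) - P x * Real.log Z
        ≤ Q x * Real.exp (f x) / Z - P x := by
    intro x hx
    have hPx : 0 < P x := by
      simpa [hS, Finset.mem_filter] using hx
    have hQx : 0 < Q x := hsupp x hPx
    have hgx : 0 < Q x * Real.exp (f x) := mul_pos hQx (Real.exp_pos _)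
    have hPZ : 0 < P x * Z := mul_pos hPx hZpos
    have harg : 0 < Q x * Real.exp (f x) / (P x * Z) := div_pos hgx hPZ
    have hlog := Real.log_le_sub_one_of_pos harg
    have h1 : Real.log (Q x * Real.exp (f x) / (P x * Z))
        = f x - Real.log (P x / Q x) - Real.log Z := by
      rw [Real.log_div hgx.ne' hPZ.ne', Real.log_mul hQx.ne' (Real.exp_pos _).ne',
        Real.log_mul hPx.ne' hZpos.ne', Real.log_exp, Real.log_div hPx.ne' hQx.ne']
      ring
    have h2 := mul_le_mul_of_nonneg_left hlog hPx.le
    rw [h1] at h2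
    calc f x * P x - P x * Real.log (P x / Q x) - P x * Real.log Z
        = P x * (f x - Real.log (P x / Q x) - Real.log Z) := by ring
      _ ≤ P x * (Q x * Real.exp (f x) / (P x * Z) - 1) := h2
      _ = Q x * Real.exp (f x) / Z - P x := by
          field_simp
  have hsum := Finset.sum_le_sum key
  rw [Finset.sum_sub_distrib, Finset.sum_sub_distrib, Finset.sum_sub_distrib,
    ← Finset.sum_mul, hPS, one_mul] at hsum
  have hgsum : ∑ x ∈ S, Q x * Real.exp (f x) ≤ Z := by
    rw [hZ]
    exact Finset.sum_le_sum_of_subset_of_nonneg (Finset.subset_univ _)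
      (fun i _ _ => hg0 i)
  have hdiv : ∑ x ∈ S, Q x * Real.exp (f x) / Z ≤ 1 := by
    rw [← Finset.sum_div]
    rw [div_le_one hZpos]
    exact hgsum
  rw [hfP]
  linarith
end
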